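/- arXiv:2506.19522 — 2 statements merged into one kernel-verified Lean document; each statement's English description precedes it below -/
import Mathlib

section
/- Let V: ℝⁿ → ℝ be continuously differentiable with V(0) = 0, V(x) > 0 for x ≠ 0, V radially unbounded, and suppose along solutions of ẋ = f(x) we have V̇(x) ≤ −k·V(x)^ρ for all x ≠ 0 with k > 0 and ρ ∈ (0,1). Then the origin is finite-time stable: every solution reaches x = 0 in time at most V(x(0))^(1−ρ)/(k(1−ρ)). -/
/-!
Along a solution that avoids the origin, `v = V ∘ x` is positive with `v' ≤ -k v ^ ρ`, so
`v ^ (1 - ρ) + k (1 - ρ) t` is nonincreasing. As `v ^ (1 - ρ)` stays positive, the solution can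
avoid the origin only for a time shorter than `V (x 0) ^ (1 - ρ) / (k (1 - ρ))`.
-/

open Set

theorem antitoneOn_rpow_one_sub_add_mul {D : Set ℝ} (hD : Convex ℝ D) {v v' : ℝ → ℝ} {k ρ : ℝ}
    (hρ : ρ ≤ 1) (hv : ∀ t ∈ D, HasDerivAt v (v' t) t) (hpos : ∀ t ∈ D, 0 < v t)
    (hdec : ∀ t ∈ D, v' t ≤ -k * v t ^ ρ) :
    AntitoneOn (fun t => v t ^ (1 - ρ) + k * (1 - ρ) * t) D := by
  have hderiv : ∀ t ∈ D, HasDerivAt (fun t => v t ^ (1 - ρ) + k * (1 - ρ) * t)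
      (v' t * (1 - ρ) * v t ^ (-ρ) + k * (1 - ρ)) t := fun t ht => by
    have hpow := (hv t ht).rpow_const (p := 1 - ρ) (Or.inl (hpos t ht).ne')
    rw [sub_sub_cancel_left] at hpow
    exact hpow.add (((hasDerivAt_id' t).const_mul (k * (1 - ρ))).congr_deriv (mul_one _))
  refine antitoneOn_of_hasDerivWithinAt_nonpos hD
    (fun t ht => (hderiv t ht).continuousAt.continuousWithinAt)
    (fun t ht => (hderiv t (interior_subset ht)).hasDerivWithinAt) fun t ht => ?_
  replace ht := interior_subset ht
  have hvρ : v t ^ ρ * v t ^ (-ρ) = 1 := by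
    rw [← Real.rpow_add (hpos t ht), add_neg_cancel, Real.rpow_zero]
  have hrate : v' t * v t ^ (-ρ) ≤ -k :=
    calc v' t * v t ^ (-ρ) ≤ -k * v t ^ ρ * v t ^ (-ρ) :=
          mul_le_mul_of_nonneg_right (hdec t ht) (Real.rpow_nonneg (hpos t ht).le _)
      _ = -k := by rw [mul_assoc, hvρ, mul_one]
  linarith [mul_le_mul_of_nonneg_left hrate (sub_nonneg.2 hρ)]

theorem sub_lt_rpow_div_of_deriv_le_neg_rpow {v v' : ℝ → ℝ} {k ρ a b : ℝ} (hk : 0 < k)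
    (hρ : ρ < 1) (hab : a ≤ b) (hv : ∀ t ∈ Icc a b, HasDerivAt v (v' t) t)
    (hpos : ∀ t ∈ Icc a b, 0 < v t) (hdec : ∀ t ∈ Icc a b, v' t ≤ -k * v t ^ ρ) :
    b - a < v a ^ (1 - ρ) / (k * (1 - ρ)) := by
  have hkρ : 0 < k * (1 - ρ) := mul_pos hk (sub_pos.2 hρ)
  have hdrop : v b ^ (1 - ρ) + k * (1 - ρ) * b ≤ v a ^ (1 - ρ) + k * (1 - ρ) * a :=
    antitoneOn_rpow_one_sub_add_mul (convex_Icc a b) hρ.le hv hpos hdec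
      (left_mem_Icc.2 hab) (right_mem_Icc.2 hab) hab
  have hvb : 0 < v b ^ (1 - ρ) := Real.rpow_pos_of_pos (hpos b (right_mem_Icc.2 hab)) _
  rw [lt_div_iff₀ hkρ]
  linarith

theorem finite_time_stability_general {n : ℕ} (f : (Fin n → ℝ) → (Fin n → ℝ))
    (V : (Fin n → ℝ) → ℝ) (hV : ContDiff ℝ 1 V) (hV0 : V 0 = 0)
    (hVpos : ∀ x, x ≠ 0 → 0 < V x)
    (k ρ : ℝ) (hk : 0 < k) (hρ : ρ ∈ Set.Ioo (0:ℝ) 1)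
    (hdec : ∀ x, x ≠ 0 → fderiv ℝ V x (f x) ≤ -k * Real.rpow (V x) ρ)
    (x : ℝ → (Fin n → ℝ)) (hx : ∀ t ≥ (0:ℝ), HasDerivAt x (f (x t)) t) :
    ∃ T ∈ Set.Icc (0:ℝ)
        (Real.rpow (V (x 0)) (1 - ρ) / (k * (1 - ρ))), x T = 0 := by
  set T₀ := Real.rpow (V (x 0)) (1 - ρ) / (k * (1 - ρ))
  have hV_nonneg : 0 ≤ V (x 0) := by
    rcases eq_or_ne (x 0) 0 with h | h
    · rw [h, hV0]
    · exact (hVpos _ h).le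
  have hT₀ : 0 ≤ T₀ :=
    div_nonneg (Real.rpow_nonneg hV_nonneg _) (mul_pos hk (sub_pos.2 hρ.2)).le
  by_contra! hne
  have hVx : ∀ t ≥ (0:ℝ), HasDerivAt (fun s => V (x s)) (fderiv ℝ V (x t) (f (x t))) t :=
    fun t ht => ((hV.differentiable one_ne_zero (x t)).hasFDerivAt).comp_hasDerivAt t (hx t ht)
  have hlt := sub_lt_rpow_div_of_deriv_le_neg_rpow hk hρ.2 hT₀ (fun t ht => hVx t ht.1)
    (fun t ht => hVpos _ (hne t ht)) (fun t ht => hdec _ (hne t ht))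
  simp only [sub_zero] at hlt
  exact hlt.false

theorem finite_time_stability {n : ℕ} (f : (Fin n → ℝ) → (Fin n → ℝ))
    (hf : LocallyLipschitz f) (hf0 : f 0 = 0)
    (V : (Fin n → ℝ) → ℝ) (hV : ContDiff ℝ 1 V) (hV0 : V 0 = 0)
    (hVpos : ∀ x, x ≠ 0 → 0 < V x)
    (hVrad : ∀ c : ℝ, ∃ R : ℝ, ∀ x, R ≤ ‖x‖ → c ≤ V x)
    (k ρ : ℝ) (hk : 0 < k) (hρ : ρ ∈ Set.Ioo (0:ℝ) 1)
    (hdec : ∀ x, x ≠ 0 → fderiv ℝ V x (f x) ≤ -k * Real.rpow (V x) ρ)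
    (x : ℝ → (Fin n → ℝ)) (hx : ∀ t ≥ (0:ℝ), HasDerivAt x (f (x t)) t) :
    ∃ T ∈ Set.Icc (0:ℝ)
        (Real.rpow (V (x 0)) (1 - ρ) / (k * (1 - ρ))), x T = 0 :=
  finite_time_stability_general f V hV hV0 hVpos k ρ hk hρ hdec x hx
end

section
/- Under the planar kinematics with saturation model ȧ_M = [1 − (a_M/a_max)ⁿ]b_y − ρ a_M, choosing the commanded input b_y = [ρ a_M + α̇_y − z₂/V_M − k_y z_y] / [1 − (a_M/a_max)ⁿ] (valid when |a_M| < a_max) yields V̇ = −k₂ z₂² − k_y z_y² for the composite Lyapunov function V = (1/2)z₂² + (1/2)z_y², implying V(t) ≤ V(0)e^(−2 min(k₂,k_y) t) and asymptotic convergence of z₂ and z_y to zero. -/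
/-!
Since `|a_M| < a_max`, the commanded input cancels the saturation factor exactly, and the
cross terms `± z₂ z_y / V_M` of the two error equations cancel, leaving
`V̇ = -k₂ z₂² - k_y z_y² ≤ -2 min(k₂, k_y) V`. Then `V(t) exp (2 min(k₂, k_y) t)` is
antitone, which is the exponential bound, and each error is squeezed by `√(2 V)`.
-/

open Filter Topology Real

theorem pow_lt_one_of_abs_lt_one {K : Type*} [Field K] [LinearOrder K] [IsStrictOrderedRing K]
    {x : K} {n : ℕ} (hx : |x| < 1) (hn : n ≠ 0) : x ^ n < 1 :=
  (le_abs_self _).trans_lt (by rw [abs_pow]; exact pow_lt_one₀ (abs_nonneg x) hx hn)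

theorem one_sub_div_pow_pos_of_abs_lt {K : Type*} [Field K] [LinearOrder K]
    [IsStrictOrderedRing K] {a b : K} {n : ℕ} (hab : |a| < b) (hn : n ≠ 0) :
    0 < 1 - (a / b) ^ n := by
  have hb : 0 < b := (abs_nonneg a).trans_lt hab
  have hlt : |a / b| < 1 := by rwa [abs_div, abs_of_pos hb, div_lt_one hb]
  linarith [pow_lt_one_of_abs_lt_one hlt hn]

theorem HasDerivAt.half_sq_add_half_sq {f g : ℝ → ℝ} {f' g' t : ℝ} (hf : HasDerivAt f f' t)
    (hg : HasDerivAt g g' t) :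
    HasDerivAt (fun s => 1 / 2 * f s ^ 2 + 1 / 2 * g s ^ 2) (f t * f' + g t * g') t := by
  refine (((hf.fun_pow 2).const_mul (1 / 2)).add
    ((hg.fun_pow 2).const_mul (1 / 2))).congr_deriv ?_
  ring

theorem le_mul_exp_of_hasDerivAt_le_mul {V V' : ℝ → ℝ} {c : ℝ}
    (hV : ∀ t, HasDerivAt V (V' t) t) (hle : ∀ t, V' t ≤ c * V t) {t : ℝ} (ht : 0 ≤ t) :
    V t ≤ V 0 * exp (c * t) := by
  have hanti : Antitone fun s => V s * exp (-c * s) := by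
    refine antitone_of_hasDerivAt_nonpos
      (fun s => (hV s).mul (((hasDerivAt_id s).const_mul (-c)).exp)) fun s => ?_
    have hnonpos := mul_nonpos_of_nonpos_of_nonneg (sub_nonpos.2 (hle s)) (exp_pos (-c * s)).le
    simp only [id, mul_one, Pi.zero_apply]
    linarith
  have hmono := hanti ht
  simp only [mul_zero, exp_zero, mul_one] at hmono
  calc V t = V t * exp (-c * t) * exp (c * t) := by rw [mul_assoc, ← exp_add]; simp
    _ ≤ V 0 * exp (c * t) := by gcongr

theorem tendsto_zero_of_sq_le_mul_exp {f : ℝ → ℝ} {A c : ℝ} (hc : c < 0)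
    (hf : ∀ t ≥ 0, f t ^ 2 ≤ A * exp (c * t)) : Tendsto f atTop (𝓝 0) := by
  have hexp : Tendsto (fun t => A * exp (c * t)) atTop (𝓝 0) := by
    simpa using (tendsto_exp_atBot.comp (tendsto_id.const_mul_atTop_of_neg hc)).const_mul A
  refine squeeze_zero_norm' ?_ (by simpa using hexp.sqrt)
  filter_upwards [eventually_ge_atTop 0] with t ht
  exact abs_le_sqrt (hf t ht)

theorem planar_composite_lyapunov_general (VM aMax ρ k2 ky : ℝ) (n : ℕ)
    (hVM : 0 < VM) (hk2 : 0 < k2) (hky : 0 < ky)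
    (hn : 2 ≤ n)
    (r σ σd αy aM : ℝ → ℝ) (σd' αy' : ℝ → ℝ)
    (hsat : ∀ t, |aM t| < aMax)
    (hσt : ∀ t, HasDerivAt σ (aM t / VM - (-VM * Real.sin (σ t) / r t)) t)
    (hσd : ∀ t, HasDerivAt σd (σd' t) t)
    (hα : ∀ t, αy t = VM * (σd' t - VM * Real.sin (σ t) / r t - k2 * (σ t - σd t)))
    (hα' : ∀ t, HasDerivAt αy (αy' t) t)
    (by_ : ℝ → ℝ)
    (hby : ∀ t, by_ t = (ρ * aM t + αy' t - (σ t - σd t) / VM - ky * (aM t - αy t)) /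
        (1 - (aM t / aMax) ^ n))
    (haM : ∀ t, HasDerivAt aM ((1 - (aM t / aMax) ^ n) * by_ t - ρ * aM t) t)
    (V : ℝ → ℝ)
    (hV : ∀ t, V t = (1/2) * (σ t - σd t) ^ 2 + (1/2) * (aM t - αy t) ^ 2) :
    (∀ t, HasDerivAt V (-k2 * (σ t - σd t) ^ 2 - ky * (aM t - αy t) ^ 2) t) ∧
    (∀ t ≥ (0:ℝ), V t ≤ V 0 * Real.exp (-2 * min k2 ky * t)) ∧
    Filter.Tendsto (fun t => σ t - σd t) Filter.atTop (nhds 0) ∧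
    Filter.Tendsto (fun t => aM t - αy t) Filter.atTop (nhds 0) := by
  have hderiv : ∀ t, HasDerivAt V (-k2 * (σ t - σd t) ^ 2 - ky * (aM t - αy t) ^ 2) t := by
    intro t
    rw [funext hV]
    refine ((hσt t).sub (hσd t)).half_sq_add_half_sq ((haM t).sub (hα' t)) |>.congr_deriv ?_
    have hσd' : σd' t = αy t / VM + VM * sin (σ t) / r t + k2 * (σ t - σd t) := by
      rw [hα t]; field_simp; ring
    rw [Pi.sub_apply, Pi.sub_apply, hby t,
      mul_div_cancel₀ _ (one_sub_div_pow_pos_of_abs_lt (hsat t) (by omega)).ne']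
    linear_combination (σd t - σ t) * hσd'
  have hbound : ∀ t ≥ (0:ℝ), V t ≤ V 0 * exp (-2 * min k2 ky * t) := fun t ht =>
    le_mul_exp_of_hasDerivAt_le_mul hderiv (fun s => by
      rw [hV s]
      nlinarith [min_le_left k2 ky, min_le_right k2 ky, sq_nonneg (σ s - σd s),
        sq_nonneg (aM s - αy s)]) ht
  have hrate : -2 * min k2 ky < 0 := by linarith [lt_min hk2 hky]
  refine ⟨hderiv, hbound, tendsto_zero_of_sq_le_mul_exp (A := 2 * V 0) hrate fun t ht => ?_,
    tendsto_zero_of_sq_le_mul_exp (A := 2 * V 0) hrate fun t ht => ?_⟩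
  all_goals
    have hVt := hbound t ht
    rw [hV t] at hVt
    nlinarith [sq_nonneg (σ t - σd t), sq_nonneg (aM t - αy t)]

theorem planar_composite_lyapunov (VM aMax ρ k2 ky : ℝ) (n : ℕ)
    (hVM : 0 < VM) (haMax : 0 < aMax) (hρ : 0 < ρ) (hk2 : 0 < k2) (hky : 0 < ky)
    (hn : 2 ≤ n) (hne : Even n)
    (r θ σ σd αy aM : ℝ → ℝ) (σd' αy' : ℝ → ℝ)
    (hr : ∀ t, 0 < r t)
    (hsat : ∀ t, |aM t| < aMax)
    (hrt : ∀ t, HasDerivAt r (-VM * Real.cos (σ t)) t)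
    (hθt : ∀ t, HasDerivAt θ (-VM * Real.sin (σ t) / r t) t)
    (hσt : ∀ t, HasDerivAt σ (aM t / VM - (-VM * Real.sin (σ t) / r t)) t)
    (hσd : ∀ t, HasDerivAt σd (σd' t) t)
    (hα : ∀ t, αy t = VM * (σd' t - VM * Real.sin (σ t) / r t - k2 * (σ t - σd t)))
    (hα' : ∀ t, HasDerivAt αy (αy' t) t)
    (by_ : ℝ → ℝ)
    (hby : ∀ t, by_ t = (ρ * aM t + αy' t - (σ t - σd t) / VM - ky * (aM t - αy t)) /
        (1 - (aM t / aMax) ^ n))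
    (haM : ∀ t, HasDerivAt aM ((1 - (aM t / aMax) ^ n) * by_ t - ρ * aM t) t)
    (V : ℝ → ℝ)
    (hV : ∀ t, V t = (1/2) * (σ t - σd t) ^ 2 + (1/2) * (aM t - αy t) ^ 2) :
    (∀ t, HasDerivAt V (-k2 * (σ t - σd t) ^ 2 - ky * (aM t - αy t) ^ 2) t) ∧
    (∀ t ≥ (0:ℝ), V t ≤ V 0 * Real.exp (-2 * min k2 ky * t)) ∧
    Filter.Tendsto (fun t => σ t - σd t) Filter.atTop (nhds 0) ∧
    Filter.Tendsto (fun t => aM t - αy t) Filter.atTop (nhds 0) :=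
  planar_composite_lyapunov_general VM aMax ρ k2 ky n hVM hk2 hky hn r σ σd αy aM σd' αy' hsat hσt
    hσd hα hα' by_ hby haM V hV
end
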